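/- Let ε have E[ε] = 0, E[ε²] = σ² > 0 and suppose E[|ε/σ|^m] ≤ C for all m ≤ K. Then the recursively defined coefficients satisfy |γₖ| ≤ Cₖ·σᵏ for each 2 ≤ k ≤ K, where Cₖ depends only on k and C. -/

import Mathlib

open MeasureTheory ProbabilityTheory
open scoped BigOperators

/-- The recursively defined bias-correction coefficients `γₖ` built from the
moments `m k = E[εᵏ]` of the measurement error. -/
noncomputable def gammaCoef (m : ℕ → ℝ) : ℕ → ℝ
  | 0 => 0
  | 1 => 0
  | 2 => m 2 / 2
  | 3 => m 3 / 6
  | k + 4 =>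
      m (k + 4) / (Nat.factorial (k + 4) : ℝ) -
        ∑ ℓ ∈ (Finset.Icc 2 (k + 2)).attach,
          m (k + 4 - ℓ.1) / (Nat.factorial (k + 4 - ℓ.1) : ℝ) * gammaCoef m ℓ.1
  termination_by k => k
  decreasing_by
    have := (Finset.mem_Icc.mp ℓ.2).2
    omega

/-!
Bounding every moment `|E[εʲ]| ≤ C σʲ` and feeding these bounds through the triangle inequality
into the recursion for `γₖ` bounds `|γₖ|` by `Dₖ σᵏ`, where `Dₖ` satisfies the same recursion with
every moment replaced by `C` and every minus sign by a plus. Each term of the recursion is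
homogeneous of degree `k` in `σ`, since `(k - ℓ) + ℓ = k`.
-/

noncomputable def gammaBound (C : ℝ) : ℕ → ℝ
  | 0 => 0
  | 1 => 0
  | 2 => C / 2
  | 3 => C / 6
  | k + 4 =>
      C / (Nat.factorial (k + 4) : ℝ) +
        ∑ ℓ ∈ (Finset.Icc 2 (k + 2)).attach,
          C / (Nat.factorial (k + 4 - ℓ.1) : ℝ) * gammaBound C ℓ.1
  termination_by k => k
  decreasing_by
    have := (Finset.mem_Icc.mp ℓ.2).2
    omega

lemma abs_div_le_div_mul_pow {x M s d : ℝ} {n : ℕ} (hd : 0 < d) (hx : |x| ≤ M * s ^ n) :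
    |x / d| ≤ M / d * s ^ n := by
  rw [abs_div, abs_of_pos hd, div_mul_eq_mul_div]
  gcongr

lemma abs_div_mul_le_mul_pow_add {x y M D s d : ℝ} {a b : ℕ} (hd : 0 < d)
    (hx : |x| ≤ M * s ^ a) (hy : |y| ≤ D * s ^ b) :
    |x / d * y| ≤ M / d * D * s ^ (a + b) :=
  calc |x / d * y| = |x / d| * |y| := abs_mul _ _
    _ ≤ M / d * s ^ a * (D * s ^ b) :=
        mul_le_mul (abs_div_le_div_mul_pow hd hx) hy (abs_nonneg _)
          ((abs_nonneg _).trans (abs_div_le_div_mul_pow hd hx))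
    _ = M / d * D * s ^ (a + b) := by ring

theorem abs_gammaCoef_le {m : ℕ → ℝ} {M s : ℝ} {K : ℕ}
    (hm : ∀ j, 2 ≤ j → j ≤ K → |m j| ≤ M * s ^ j) :
    ∀ k ≤ K, |gammaCoef m k| ≤ gammaBound M k * s ^ k := by
  intro k
  induction k using Nat.strong_induction_on with
  | _ k ih =>
  intro hkK
  match k, hkK with
  | 0, _ => simp [gammaCoef, gammaBound]
  | 1, _ => simp [gammaCoef, gammaBound]
  | 2, hkK =>
    rw [gammaCoef, gammaBound]
    exact abs_div_le_div_mul_pow two_pos (hm 2 le_rfl hkK)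
  | 3, hkK =>
    rw [gammaCoef, gammaBound]
    exact abs_div_le_div_mul_pow (by norm_num) (hm 3 (by norm_num) hkK)
  | j + 4, hkK =>
    rw [gammaCoef, gammaBound, add_mul, Finset.sum_mul]
    have hterm : ∀ ℓ ∈ (Finset.Icc 2 (j + 2)).attach,
        |m (j + 4 - ℓ.1) / (Nat.factorial (j + 4 - ℓ.1) : ℝ) * gammaCoef m ℓ.1|
          ≤ M / (Nat.factorial (j + 4 - ℓ.1) : ℝ) * gammaBound M ℓ.1 * s ^ (j + 4) := by
      intro ℓ _
      obtain ⟨hℓ2, hℓj⟩ := Finset.mem_Icc.mp ℓ.2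
      have h := abs_div_mul_le_mul_pow_add (Nat.cast_pos.mpr (Nat.factorial_pos (j + 4 - ℓ.1)))
        (hm (j + 4 - ℓ.1) (by omega) (by omega)) (ih ℓ.1 (by omega) (by omega))
      rwa [Nat.sub_add_cancel (by omega)] at h
    calc _ ≤ _ := abs_sub _ _
      _ ≤ _ := add_le_add
          (abs_div_le_div_mul_pow (Nat.cast_pos.mpr (Nat.factorial_pos _)) (hm _ (by omega) hkK))
          ((Finset.abs_sum_le_sum_abs _ _).trans (Finset.sum_le_sum hterm))

lemma abs_integral_pow_le {Ω : Type*} [MeasurableSpace Ω] (μ : Measure Ω) (ε : Ω → ℝ)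
    {σ : ℝ} (hσ : 0 < σ) (j : ℕ) :
    |∫ ω, ε ω ^ j ∂μ| ≤ (∫ ω, |ε ω / σ| ^ j ∂μ) * σ ^ j := by
  have hscale : ∀ ω, |ε ω ^ j| = |ε ω / σ| ^ j * σ ^ j := fun ω => by
    rw [abs_pow, abs_div, abs_of_pos hσ, div_pow, div_mul_cancel₀ _ (by positivity)]
  calc |∫ ω, ε ω ^ j ∂μ| ≤ ∫ ω, |ε ω ^ j| ∂μ := abs_integral_le_integral_abs
    _ = (∫ ω, |ε ω / σ| ^ j ∂μ) * σ ^ j := by simp_rw [hscale]; exact integral_mul_const _ _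

theorem gammaCoef_order_sigma_k_general
    (K : ℕ) (C : ℝ)
    {Ω : Type} [MeasurableSpace Ω] (μ : Measure Ω) :
    ∃ D : ℕ → ℝ, ∀ (ε : Ω → ℝ) (σ : ℝ), 0 < σ →
      (∫ ω, ε ω ∂μ) = 0 → (∫ ω, ε ω ^ 2 ∂μ) = σ ^ 2 →
      (∀ m ≤ K, Integrable (fun ω => ε ω ^ m) μ) →
      (∀ m ≤ K, Integrable (fun ω => |ε ω / σ| ^ m) μ) →
      (∀ m ≤ K, (∫ ω, |ε ω / σ| ^ m ∂μ) ≤ C) →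
      ∀ k, 2 ≤ k → k ≤ K →
        |gammaCoef (fun j => ∫ ω, ε ω ^ j ∂μ) k| ≤ D k * σ ^ k := by
  refine ⟨gammaBound C, fun ε σ hσ _ _ _ _ hC k _ hkK => abs_gammaCoef_le ?_ k hkK⟩
  intro j _ hjK
  exact (abs_integral_pow_le μ ε hσ j).trans
    (mul_le_mul_of_nonneg_right (hC j hjK) (by positivity))

theorem gammaCoef_order_sigma_k
    (K : ℕ) (hK : 2 ≤ K) (C : ℝ)
    {Ω : Type} [MeasurableSpace Ω] (μ : Measure Ω) [IsProbabilityMeasure μ] :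
    ∃ D : ℕ → ℝ, ∀ (ε : Ω → ℝ) (σ : ℝ), 0 < σ →
      (∫ ω, ε ω ∂μ) = 0 → (∫ ω, ε ω ^ 2 ∂μ) = σ ^ 2 →
      (∀ m ≤ K, Integrable (fun ω => ε ω ^ m) μ) →
      (∀ m ≤ K, Integrable (fun ω => |ε ω / σ| ^ m) μ) →
      (∀ m ≤ K, (∫ ω, |ε ω / σ| ^ m ∂μ) ≤ C) →
      ∀ k, 2 ≤ k → k ≤ K →
        |gammaCoef (fun j => ∫ ω, ε ω ^ j ∂μ) k| ≤ D k * σ ^ k :=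
  gammaCoef_order_sigma_k_general K C μ
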